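/- arXiv:2501.15634 — 2 statements merged into one kernel-verified Lean document; each statement's English description precedes it below -/
import Mathlib

section
/- Flip probability bound: for every data record i with weight w_i > 0, the flip probability q_{N,i} = |{θ ∈ R_N(ε) : θ_i = 1}| / |R_N(ε)| satisfies 0 ≤ q_{N,i} ≤ 1/2. Moreover if w_i = 0 and N ≥ 1, then q_{N,i} = 1/2. -/
/-!
With nonnegative weights the feasible set `R` is a lower set in `Fin N → Bool`, so clearing
bit `i` maps the members with `θ i = true` injectively to those with `θ i = false`: at most
half of `R` has bit `i` set. When `w i = 0` bit `i` does not affect feasibility, setting it is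
an injection in the other direction, and `R` (which contains `0` since `ε ≥ 0`) splits exactly
in half.
-/

open Finset Function

section Weight

variable {ι M : Type*} [Fintype ι] [AddCommMonoid M]

theorem monotone_sum_ite [PartialOrder M] [IsOrderedAddMonoid M] {w : ι → M}
    (hw : ∀ j, 0 ≤ w j) : Monotone fun θ : ι → Bool => ∑ j, if θ j then w j else 0 :=
  fun θ θ' hθ => sum_le_sum fun j _ => by
    have := hθ j
    revert this
    cases θ j <;> cases θ' j <;> simp [hw j]

theorem sum_ite_update_of_eq_zero [DecidableEq ι] {w : ι → M} {i : ι} (hwi : w i = 0)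
    (θ : ι → Bool) (b : Bool) :
    ∑ j, (if update θ i b j then w j else 0) = ∑ j, if θ j then w j else 0 :=
  sum_congr rfl fun j _ => by
    rcases eq_or_ne j i with rfl | hj
    · simp [hwi]
    · rw [update_of_ne hj]

end Weight

section FlipCount

variable {ι : Type*} [DecidableEq ι] {s : Finset (ι → Bool)} {i : ι}

theorem card_filter_apply_eq_le_of_update_mem {b : Bool}
    (h : ∀ θ ∈ s, θ i = b → update θ i (!b) ∈ s) :
    #(s.filter (· i = b)) ≤ #(s.filter (· i = !b)) := by
  refine card_le_card_of_injOn (update · i (!b)) (fun θ hθ => ?_) (fun θ hθ θ' hθ' heq => ?_)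
  · rw [mem_coe, mem_filter] at hθ
    simp [h θ hθ.1 hθ.2]
  · rw [coe_filter] at hθ hθ'
    funext j
    rcases eq_or_ne j i with rfl | hj
    · rw [hθ.2, hθ'.2]
    · simpa [update_of_ne hj] using congrFun heq j

theorem IsLowerSet.card_filter_apply_true_le (hs : IsLowerSet (s : Set (ι → Bool))) (i : ι) :
    #(s.filter (· i = true)) ≤ #(s.filter (· i = false)) :=
  card_filter_apply_eq_le_of_update_mem fun _ hθ _ =>
    hs (update_le_self_iff.2 (Bool.false_le _)) hθ

omit [DecidableEq ι] in
theorem card_filter_apply_true_add_card_filter_apply_false (s : Finset (ι → Bool)) (i : ι) :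
    #(s.filter (· i = true)) + #(s.filter (· i = false)) = #s := by
  simpa only [Bool.not_eq_true] using card_filter_add_card_filter_not (s := s) (· i = true)

end FlipCount

theorem div_le_half_of_two_mul_le {K : Type*} [Field K] [LinearOrder K] [IsStrictOrderedRing K]
    {a n : ℕ} (h : 2 * a ≤ n) : (a : K) / n ≤ 1 / 2 := by
  rcases n.eq_zero_or_pos with rfl | hn
  · simp
  · rw [div_le_div_iff₀ (by exact_mod_cast hn) two_pos]
    exact_mod_cast (by omega : a * 2 ≤ 1 * n)

/-- Flip probability bounds: for positive weight, 0 ≤ q_{N,i} ≤ 1/2; for zero weight,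
q_{N,i} = 1/2. -/
theorem flip_probability_bound (N : ℕ) (w : Fin N → ℝ)
    (hw : ∀ i, 0 ≤ w i ∧ w i ≤ 1) (ε : ℝ) (hε : 0 ≤ ε)
    (R : Finset (Fin N → Bool))
    (hR : R = Finset.univ.filter
      (fun θ => ∑ j, (if θ j then w j else 0) ≤ (N : ℝ) * ε))
    (i : Fin N) :
    (0 < w i →
      0 ≤ ((R.filter (fun θ => θ i = true)).card : ℝ) / (R.card : ℝ) ∧
      ((R.filter (fun θ => θ i = true)).card : ℝ) / (R.card : ℝ) ≤ 1 / 2) ∧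
    (w i = 0 →
      ((R.filter (fun θ => θ i = true)).card : ℝ) / (R.card : ℝ) = 1 / 2) := by
  have hlower : IsLowerSet (R : Set (Fin N → Bool)) := by
    simp only [hR, coe_filter, mem_univ, true_and]
    exact isLowerSet_Iic _ |>.preimage (monotone_sum_ite fun j => (hw j).1)
  have hsplit := card_filter_apply_true_add_card_filter_apply_false R i
  have hle := hlower.card_filter_apply_true_le i
  refine ⟨fun _ => ⟨by positivity, div_le_half_of_two_mul_le (by omega)⟩, fun hwi => ?_⟩
  have hge : #(R.filter (· i = false)) ≤ #(R.filter (· i = true)) :=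
    card_filter_apply_eq_le_of_update_mem fun θ hθ _ => by
      simpa [hR, sum_ite_update_of_eq_zero hwi] using hθ
  have hne : R.Nonempty := ⟨fun _ => false, by simpa [hR] using mul_nonneg N.cast_nonneg hε⟩
  have hpos : (0 : ℝ) < #(R.filter (· i = true)) := by
    have := hne.card_pos
    exact_mod_cast (by omega)
  rw [← hsplit, le_antisymm hge hle, Nat.cast_add]
  field_simp
  ring
end

section
/- Monotonicity of flip probability in weight: if w_i ≤ w_j (and all other weights are equal in the sense that the multiset of remaining weights coincides), then q_{N,i} ≥ q_{N,j}; i.e., records with larger weight are flipped in at most as many models of the Rashomon set. -/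
/-!
Exchanging the coordinates `i` and `j` of a model maps the models of the Rashomon set that flip
`j` injectively to models that flip `i`: if `θ i = θ j` nothing changes, and otherwise the weight
`w j` paid for flipping `j` is replaced by the weight `w i ≤ w j`, so the budget is still met.
-/

open Finset

section

variable {ι M : Type*} [Fintype ι] [DecidableEq ι] [AddCommMonoid M] [PartialOrder M]

/-- The paper's `R_N(ε)` is `rashomonSet w (N * ε)`. -/
def rashomonSet [DecidableLE M] (w : ι → M) (t : M) : Finset (ι → Bool) :=
  univ.filter fun θ => ∑ k, (if θ k then w k else 0) ≤ t

variable [IsOrderedAddMonoid M]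

theorem sum_ite_comp_swap_le {w : ι → M} {θ : ι → Bool} {i j : ι}
    (hwij : w i ≤ w j) (hθj : θ j = true) :
    ∑ k, (if θ (Equiv.swap i j k) then w k else 0) ≤ ∑ k, if θ k then w k else 0 := by
  by_cases hθi : θ i = true
  · have hswap : θ ∘ Equiv.swap i j = θ := by
      funext k
      rcases eq_or_ne k i with rfl | hki
      · simp [hθi, hθj]
      rcases eq_or_ne k j with rfl | hkj
      · simp [hθi, hθj]
      simp [Equiv.swap_apply_of_ne_of_ne hki hkj]
    exact (congrArg (fun θ' : ι → Bool => ∑ k, if θ' k then w k else 0) hswap).le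
  · rw [← Equiv.sum_comp (Equiv.swap i j)]
    refine sum_le_sum fun k _ => ?_
    rcases eq_or_ne k i with rfl | hki
    · simp [hθi]
    rcases eq_or_ne k j with rfl | hkj
    · simpa [hθj] using hwij
    simp [Equiv.swap_apply_of_ne_of_ne hki hkj]

theorem card_filter_rashomonSet_le [DecidableLE M] {w : ι → M} {i j : ι} (hwij : w i ≤ w j)
    (t : M) :
    ((rashomonSet w t).filter (fun θ => θ j = true)).card
      ≤ ((rashomonSet w t).filter (fun θ => θ i = true)).card := by
  refine card_le_card_of_injOn (fun θ => θ ∘ Equiv.swap i j) (fun θ hθ => ?_)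
    ((Equiv.swap i j).surjective.injective_comp_right.injOn)
  simp only [rashomonSet, coe_filter, mem_filter, mem_univ, true_and, Set.mem_ofPred_eq] at hθ ⊢
  exact ⟨(sum_ite_comp_swap_le hwij hθ.2).trans hθ.1, by simpa using hθ.2⟩

end

theorem flip_probability_antitone_in_weight_general (N : ℕ) (w : Fin N → ℝ)
    (ε : ℝ)
    (R : Finset (Fin N → Bool))
    (hR : R = Finset.univ.filter
      (fun θ => ∑ k, (if θ k then w k else 0) ≤ (N : ℝ) * ε))
    (i j : Fin N) (hwij : w i ≤ w j) :
    ((R.filter (fun θ => θ j = true)).card : ℝ) / (R.card : ℝ)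
      ≤ ((R.filter (fun θ => θ i = true)).card : ℝ) / (R.card : ℝ) := by
  have hR' : R = rashomonSet w ((N : ℝ) * ε) := hR
  subst hR'
  exact div_le_div_of_nonneg_right (by exact_mod_cast card_filter_rashomonSet_le hwij _)
    (Nat.cast_nonneg _)

/-- Monotonicity of flip probability in weight: a record with larger weight is flipped
in at most as many models of the Rashomon set. -/
theorem flip_probability_antitone_in_weight (N : ℕ) (w : Fin N → ℝ)
    (hw : ∀ k, 0 ≤ w k ∧ w k ≤ 1) (ε : ℝ) (hε : 0 ≤ ε)
    (R : Finset (Fin N → Bool))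
    (hR : R = Finset.univ.filter
      (fun θ => ∑ k, (if θ k then w k else 0) ≤ (N : ℝ) * ε))
    (i j : Fin N) (hij : i ≠ j) (hwij : w i ≤ w j) :
    ((R.filter (fun θ => θ j = true)).card : ℝ) / (R.card : ℝ)
      ≤ ((R.filter (fun θ => θ i = true)).card : ℝ) / (R.card : ℝ) :=
  flip_probability_antitone_in_weight_general N w ε R hR i j hwij
end
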